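/- For every y > 0 and every nonzero integer n, 2π·∫_{−∞}^{∞} pₙ(x,y)·∂_x p₀(x,y) dx = −πny/(y² + π²n²)². -/

import Mathlib

/-!
With `a = 2πn`, the integrand is `-(2y²/π²) · x / (((x - a)² + y²) (x² + y²)²)`.
Partial fractions give an explicit antiderivative: arctangents of `(x - a)/y` and `x/y`, the
difference `log ((x - a)² + y²) - log (x² + y²)` and a rational term of degree `-1`.
The last two vanish at `±∞` while each arctangent tends to `±π/2`, so the integral is `2π` times
the arctangent coefficient `a / (y (a² + 4y²)²)`.
-/

open Real MeasureTheory

/-- Poisson kernel for the upper half-plane with pole at `2 π n`. -/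
noncomputable def p (n : ℤ) (x y : ℝ) : ℝ := (1 / π) * y / ((x - 2 * π * n) ^ 2 + y ^ 2)

open Filter Topology Bornology IsOrderBornology

theorem tendsto_linear_div_sq_add_sq_cobounded (d e y : ℝ) :
    Tendsto (fun x : ℝ => (d * x + e) / (x ^ 2 + y ^ 2)) (cobounded ℝ) (𝓝 0) := by
  have hcont : ContinuousAt (fun u : ℝ => (d * u + e * u ^ 2) / (1 + y ^ 2 * u ^ 2)) 0 :=
    ContinuousAt.div (by fun_prop) (by fun_prop) (by norm_num)
  have hlim : Tendsto (fun x : ℝ => (d * x⁻¹ + e * x⁻¹ ^ 2) / (1 + y ^ 2 * x⁻¹ ^ 2))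
      (cobounded ℝ) (𝓝 0) := by
    convert hcont.tendsto.comp tendsto_inv₀_cobounded using 2 <;> simp
  refine hlim.congr' ?_
  filter_upwards [eventually_ne_cobounded 0] with x hx
  field_simp

theorem tendsto_log_sub_log_cobounded (a y : ℝ) :
    Tendsto (fun x : ℝ => log ((x - a) ^ 2 + y ^ 2) - log (x ^ 2 + y ^ 2))
      (cobounded ℝ) (𝓝 0) := by
  have hratio : Tendsto (fun x : ℝ => 1 + (-2 * a * x + a ^ 2) / (x ^ 2 + y ^ 2))
      (cobounded ℝ) (𝓝 1) := by
    simpa only [add_zero] using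
      (tendsto_linear_div_sq_add_sq_cobounded (-2 * a) (a ^ 2) y).const_add 1
  refine (log_one ▸ (continuousAt_log one_ne_zero).tendsto.comp hratio).congr' ?_
  filter_upwards [eventually_ne_cobounded 0, eventually_ne_cobounded a] with x hx hxa
  rw [Function.comp_apply, ← log_div (by positivity) (by positivity)]
  congr 1
  field_simp
  ring

theorem tendsto_arctan_sub_div_atTop (b : ℝ) {y : ℝ} (hy : 0 < y) :
    Tendsto (fun x => arctan ((x - b) / y)) atTop (𝓝 (π / 2)) :=
  (tendsto_arctan_atTop.mono_right nhdsWithin_le_nhds).comp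
    ((tendsto_atTop_add_const_right _ (-b) tendsto_id).atTop_div_const hy)

theorem tendsto_arctan_sub_div_atBot (b : ℝ) {y : ℝ} (hy : 0 < y) :
    Tendsto (fun x => arctan ((x - b) / y)) atBot (𝓝 (-(π / 2))) :=
  (tendsto_arctan_atBot.mono_right nhdsWithin_le_nhds).comp
    ((tendsto_atBot_add_const_right _ (-b) tendsto_id).atBot_div_const hy)

theorem integrable_inv_sq_add_sq {y : ℝ} (hy : y ≠ 0) :
    Integrable fun x : ℝ => (x ^ 2 + y ^ 2)⁻¹ := by
  refine ((integrable_inv_one_add_sq.comp_div hy).const_mul (y ^ 2)⁻¹).congr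
    (Eventually.of_forall fun x => ?_)
  field_simp
  ring

noncomputable def poissonCrossAntideriv (a y x : ℝ) : ℝ :=
  a / (y * (a ^ 2 + 4 * y ^ 2) ^ 2) * (arctan ((x - a) / y) + arctan (x / y))
    - (3 * a ^ 2 + 4 * y ^ 2) / (2 * a ^ 2 * (a ^ 2 + 4 * y ^ 2) ^ 2)
      * (log ((x - a) ^ 2 + y ^ 2) - log (x ^ 2 + y ^ 2))
    - (2 * x + a) / (x ^ 2 + y ^ 2) / (2 * a * (a ^ 2 + 4 * y ^ 2))

section

variable {a y : ℝ}

theorem hasDerivAt_poissonCrossAntideriv (ha : a ≠ 0) (hy : y ≠ 0) (x : ℝ) :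
    HasDerivAt (poissonCrossAntideriv a y)
      (x / (((x - a) ^ 2 + y ^ 2) * (x ^ 2 + y ^ 2) ^ 2)) x := by
  have hQ : (x - a) ^ 2 + y ^ 2 ≠ 0 := by positivity
  have hR : x ^ 2 + y ^ 2 ≠ 0 := by positivity
  have hshift : HasDerivAt (fun x : ℝ => x - a) 1 x := (hasDerivAt_id' x).sub_const a
  have harctan := ((hshift.div_const y).arctan).add ((hasDerivAt_id' x).div_const y).arctan
  have hlog := (((hshift.pow 2).add_const (y ^ 2)).log hQ).sub
    ((((hasDerivAt_id' x).pow 2).add_const (y ^ 2)).log hR)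
  have hrat := (((hasDerivAt_id' x).const_mul 2).add_const a).div
    (((hasDerivAt_id' x).pow 2).add_const (y ^ 2)) hR
  refine (((harctan.const_mul _).sub (hlog.const_mul _)).sub (hrat.div_const _)).congr_deriv ?_
  simp only [Pi.pow_apply, Nat.cast_ofNat, Nat.add_one_sub_one, pow_one, mul_one]
  field_simp
  ring

theorem tendsto_poissonCrossAntideriv_atTop (hy : 0 < y) :
    Tendsto (poissonCrossAntideriv a y) atTop (𝓝 (a * π / (y * (a ^ 2 + 4 * y ^ 2) ^ 2))) := by
  have harctan := (tendsto_arctan_sub_div_atTop a hy).add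
    (by simpa using tendsto_arctan_sub_div_atTop 0 hy)
  have hlog := (tendsto_log_sub_log_cobounded a y).mono_left atTop_le_cobounded
  have hrat := (tendsto_linear_div_sq_add_sq_cobounded 2 a y).mono_left atTop_le_cobounded
  have h : Tendsto (poissonCrossAntideriv a y) atTop _ :=
    ((harctan.const_mul _).sub (hlog.const_mul _)).sub (hrat.div_const _)
  convert h using 2
  ring

theorem tendsto_poissonCrossAntideriv_atBot (hy : 0 < y) :
    Tendsto (poissonCrossAntideriv a y) atBot (𝓝 (-(a * π / (y * (a ^ 2 + 4 * y ^ 2) ^ 2)))) := by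
  have harctan := (tendsto_arctan_sub_div_atBot a hy).add
    (by simpa using tendsto_arctan_sub_div_atBot 0 hy)
  have hlog := (tendsto_log_sub_log_cobounded a y).mono_left atBot_le_cobounded
  have hrat := (tendsto_linear_div_sq_add_sq_cobounded 2 a y).mono_left atBot_le_cobounded
  have h : Tendsto (poissonCrossAntideriv a y) atBot _ :=
    ((harctan.const_mul _).sub (hlog.const_mul _)).sub (hrat.div_const _)
  convert h using 2
  ring

theorem integrable_poissonCross (a : ℝ) (hy : y ≠ 0) :
    Integrable fun x : ℝ => x / (((x - a) ^ 2 + y ^ 2) * (x ^ 2 + y ^ 2) ^ 2) := by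
  refine ((integrable_inv_sq_add_sq hy).const_mul (2 * |y| ^ 3)⁻¹).mono'
    (by fun_prop : Measurable _).aestronglyMeasurable (Eventually.of_forall fun x => ?_)
  have hR : 0 < x ^ 2 + y ^ 2 := by positivity
  have hAMGM : 2 * |y| * |x| ≤ x ^ 2 + y ^ 2 := by
    nlinarith [sq_nonneg (|x| - |y|), sq_abs x, sq_abs y]
  calc ‖x / (((x - a) ^ 2 + y ^ 2) * (x ^ 2 + y ^ 2) ^ 2)‖
      = |x| / (((x - a) ^ 2 + y ^ 2) * (x ^ 2 + y ^ 2) ^ 2) := by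
        rw [norm_div, Real.norm_eq_abs, Real.norm_of_nonneg (by positivity)]
    _ ≤ |x| / (y ^ 2 * (x ^ 2 + y ^ 2) ^ 2) := by
        gcongr
        exact le_add_of_nonneg_left (sq_nonneg _)
    _ = (2 * |y| * |x|) / (2 * |y| ^ 3 * (x ^ 2 + y ^ 2) ^ 2) := by
        field_simp
        rw [sq_abs]
    _ ≤ (x ^ 2 + y ^ 2) / (2 * |y| ^ 3 * (x ^ 2 + y ^ 2) ^ 2) := by gcongr
    _ = (2 * |y| ^ 3)⁻¹ * (x ^ 2 + y ^ 2)⁻¹ := by field_simp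

theorem integral_poissonCross (ha : a ≠ 0) (hy : 0 < y) :
    ∫ x : ℝ, x / (((x - a) ^ 2 + y ^ 2) * (x ^ 2 + y ^ 2) ^ 2)
      = 2 * a * π / (y * (a ^ 2 + 4 * y ^ 2) ^ 2) := by
  rw [integral_of_hasDerivAt_of_tendsto (hasDerivAt_poissonCrossAntideriv ha hy.ne')
    (integrable_poissonCross a hy.ne') (tendsto_poissonCrossAntideriv_atBot hy)
    (tendsto_poissonCrossAntideriv_atTop hy)]
  ring

end

theorem hasDerivAt_p (n : ℤ) {y : ℝ} (hy : y ≠ 0) (x : ℝ) :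
    HasDerivAt (fun s => p n s y)
      (-(2 * y * (x - 2 * π * n)) / (π * ((x - 2 * π * n) ^ 2 + y ^ 2) ^ 2)) x := by
  have hQ : (x - 2 * π * n) ^ 2 + y ^ 2 ≠ 0 := by positivity
  refine ((hasDerivAt_const x ((1 / π) * y)).div
    ((((hasDerivAt_id' x).sub_const (2 * π * n)).pow 2).add_const (y ^ 2)) hQ).congr_deriv ?_
  simp only [Pi.pow_apply, Nat.cast_ofNat, Nat.add_one_sub_one, pow_one, mul_one]
  field_simp
  ring

theorem p_mul_deriv_p_zero (n : ℤ) {y : ℝ} (hy : y ≠ 0) (x : ℝ) :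
    p n x y * deriv (fun s => p 0 s y) x
      = -(2 * y ^ 2 / π ^ 2) * (x / (((x - 2 * π * n) ^ 2 + y ^ 2) * (x ^ 2 + y ^ 2) ^ 2)) := by
  rw [(hasDerivAt_p 0 hy x).deriv, p]
  simp only [Int.cast_zero, mul_zero, sub_zero]
  field_simp

theorem integral_pn_mul_dx_p0 (y : ℝ) (hy : 0 < y) (n : ℤ) (hn : n ≠ 0) :
    2 * π * ∫ x : ℝ, p n x y * deriv (fun s => p 0 s y) x
      = -(π * n * y) / (y ^ 2 + π ^ 2 * n ^ 2) ^ 2 := by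
  have ha : 2 * π * n ≠ 0 := by simp [pi_ne_zero, hn]
  simp_rw [p_mul_deriv_p_zero n hy.ne']
  rw [integral_const_mul, integral_poissonCross ha hy]
  field_simp
  ring
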